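/- arXiv:math/0510194 — 4 statements merged into one kernel-verified Lean document; each statement's English description precedes it below -/
import Mathlib

section
/- In the twisted Heisenberg–Virasoro algebra, for any scalar e and any nonzero integer n, one has [x_n + e·I(n), x_{−n} + e·I(−n)] = −2n(x_0 + e·I(0) − e·C_DI − (e²/2)·C_I) + ((n³−n)/12)·C_D. Consequently, the elements {x_n + e·I(n) : n ≠ 0} ∪ {x_0 + e·I(0) − e·C_DI − (e²/2)·C_I, C_D} span a subalgebra isomorphic to the Virasoro algebra. -/
/-- Index set for the basis of the twisted Heisenberg–Virasoro algebra. -/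
inductive HVIdx : Type
  | x : ℤ → HVIdx
  | I : ℤ → HVIdx
  | CD : HVIdx
  | CDI : HVIdx
  | CI : HVIdx

/-- A realization of the twisted Heisenberg–Virasoro algebra 𝕃: a complex Lie
algebra with a basis `{x n, I n, C_D, C_DI, C_I}` satisfying the defining brackets. -/
structure TwistedHV (L : Type*) [LieRing L] [LieAlgebra ℂ L] where
  b : Module.Basis HVIdx ℂ L
  bracket_xx : ∀ n m : ℤ, ⁅b (.x n), b (.x m)⁆ =
      ((m : ℂ) - n) • b (.x (n + m)) +
      (if n = -m then ((n : ℂ) ^ 3 - n) / 12 else 0) • b .CD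
  bracket_xI : ∀ n m : ℤ, ⁅b (.x n), b (.I m)⁆ = (m : ℂ) • b (.I (n + m)) +
      (if n = -m then (n : ℂ) ^ 2 + n else 0) • b .CDI
  bracket_II : ∀ n m : ℤ, ⁅b (.I n), b (.I m)⁆ = (if n = -m then (n : ℂ) else 0) • b .CI
  central_CD : ∀ y : L, ⁅y, b .CD⁆ = 0
  central_CDI : ∀ y : L, ⁅y, b .CDI⁆ = 0
  central_CI : ∀ y : L, ⁅y, b .CI⁆ = 0

/-- A realization of the Virasoro algebra: a complex Lie algebra with a basis
`{L n : n ∈ ℤ} ∪ {C}` (indexed by `Option ℤ`, with `none` for the central element `C`)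
satisfying the Virasoro relations. -/
structure VirasoroAlg (V : Type*) [LieRing V] [LieAlgebra ℂ V] where
  b : Module.Basis (Option ℤ) ℂ V
  bracket_LL : ∀ n m : ℤ, ⁅b (some n), b (some m)⁆ =
      ((m : ℂ) - n) • b (some (n + m)) +
      (if n = -m then ((n : ℂ) ^ 3 - n) / 12 else 0) • b none
  central_C : ∀ v : V, ⁅v, b none⁆ = 0

/-!
With `y n = x n + e • I n`, the brackets of `𝕃` give
`⁅y n, y m⁆ = (m - n) • y (n + m) + δ_{n,-m} ((n³ - n)/12 • C_D + 2ne • C_DI + ne² • C_I)`,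
and the last two central terms are `(m - n) • (-(e • C_DI + (e²/2) • C_I))`. Shifting the
zero mode `y 0` by `-(e • C_DI + (e²/2) • C_I)` therefore absorbs them, so the shifted family
together with `C_D` satisfies the Virasoro relations. Its coordinates along the `x n` and `C_D`
form an identity matrix, so it is linearly independent and its span is a Lie subalgebra with a
Virasoro basis.
-/

open LieSubalgebra Submodule

theorem LieSubalgebra.coe_lieSpan_eq_span_of_forall_lie_mem {R L : Type*} [CommRing R]
    [LieRing L] [LieAlgebra R L] {s : Set L} (hs : ∀ᵉ (x ∈ s) (y ∈ s), ⁅x, y⁆ ∈ span R s) :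
    (lieSpan R L s : Submodule R L) = span R s := by
  suffices ∀ {x y}, x ∈ span R s → y ∈ span R s → ⁅x, y⁆ ∈ span R s by
    refine le_antisymm ?_ submodule_span_le_lieSpan
    change _ ≤ ({ span R s with lie_mem' := this } : LieSubalgebra R L)
    rw [lieSpan_le]
    exact subset_span
  intro x y hx hy
  induction hx, hy using span_induction₂ with
  | mem_mem x y hx hy => exact hs x hx y hy
  | zero_left y hy => simp
  | zero_right x hx => simp
  | add_left x y z _ _ _ hx hy => simpa using add_mem hx hy
  | add_right x y z _ _ _ hx hy => simpa using add_mem hx hy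
  | smul_left r x y _ _ h => simpa using smul_mem _ r h
  | smul_right r x y _ _ h => simpa using smul_mem _ r h

section

variable {L : Type*} [LieRing L] [LieAlgebra ℂ L]

structure IsVirasoroFamily (v : Option ℤ → L) : Prop where
  bracket_LL : ∀ n m : ℤ, ⁅v (some n), v (some m)⁆ =
      ((m : ℂ) - n) • v (some (n + m)) +
      (if n = -m then ((n : ℂ) ^ 3 - n) / 12 else 0) • v none
  central_C : ∀ y : L, ⁅y, v none⁆ = 0

namespace IsVirasoroFamily

variable {v : Option ℤ → L}

theorem lie_mem_span (hv : IsVirasoroFamily v) (i j : Option ℤ) :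
    ⁅v i, v j⁆ ∈ span ℂ (Set.range v) := by
  rcases i with _ | n
  · rw [← lie_skew, hv.central_C, neg_zero]
    exact zero_mem _
  rcases j with _ | m
  · rw [hv.central_C]
    exact zero_mem _
  rw [hv.bracket_LL]
  exact add_mem (smul_mem _ _ (subset_span ⟨_, rfl⟩)) (smul_mem _ _ (subset_span ⟨_, rfl⟩))

theorem coe_lieSpan_range (hv : IsVirasoroFamily v) :
    (lieSpan ℂ L (Set.range v) : Submodule ℂ L) = span ℂ (Set.range v) :=
  coe_lieSpan_eq_span_of_forall_lie_mem <| by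
    rintro _ ⟨i, rfl⟩ _ ⟨j, rfl⟩
    exact hv.lie_mem_span i j

noncomputable def virasoroAlg (hv : IsVirasoroFamily v) (hli : LinearIndependent ℂ v) :
    VirasoroAlg (lieSpan ℂ L (Set.range v)) := by
  let b := (Module.Basis.span hli).map (LinearEquiv.ofEq _ _ hv.coe_lieSpan_range.symm)
  have hb : ∀ i, (b i : L) = v i := fun i =>
    congrArg Subtype.val (Module.Basis.span_apply hli i)
  exact
  { b := b
    bracket_LL := fun n m => Subtype.ext <| by
      rw [LieSubalgebra.coe_bracket, hb, hb, hv.bracket_LL]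
      split_ifs <;> simp [hb]
    central_C := fun y => Subtype.ext <| by
      rw [LieSubalgebra.coe_bracket, hb, hv.central_C, ZeroMemClass.coe_zero] }

end IsVirasoroFamily

end

namespace VirasoroAlg

variable {K V : Type*} [LieRing K] [LieAlgebra ℂ K] [LieRing V] [LieAlgebra ℂ V]

noncomputable def map (W : VirasoroAlg K) (f : K ≃ₗ⁅ℂ⁆ V) : VirasoroAlg V where
  b := W.b.map f.toLinearEquiv
  bracket_LL n m := by
    simp only [Module.Basis.map_apply, LieEquiv.coe_toLinearEquiv, ← LieEquiv.map_lie,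
      W.bracket_LL, map_add, map_smul]
  central_C y := by
    rw [Module.Basis.map_apply, ← f.apply_symm_apply y, LieEquiv.coe_toLinearEquiv,
      ← LieEquiv.map_lie, W.central_C, map_zero]

theorem exists_lieEquiv_small (W : VirasoroAlg K) :
    ∃ (V : Type) (_ : LieRing V) (_ : LieAlgebra ℂ V) (_ : VirasoroAlg V),
      Nonempty (K ≃ₗ⁅ℂ⁆ V) := by
  let := W.b.repr.symm.toAddEquiv.lieRing
  let := W.b.repr.symm.lieAlgebra
  let f : K ≃ₗ⁅ℂ⁆ (Option ℤ →₀ ℂ) := (W.b.repr.symm.lieEquiv ℂ).symm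
  exact ⟨_, _, _, W.map f, ⟨f⟩⟩

end VirasoroAlg

namespace TwistedHV

variable {L : Type*} [LieRing L] [LieAlgebra ℂ L] (A : TwistedHV L) (e : ℂ)

theorem lie_I_x (n m : ℤ) : ⁅A.b (.I n), A.b (.x m)⁆ =
    -((n : ℂ) • A.b (.I (m + n)) + (if m = -n then (m : ℂ) ^ 2 + m else 0) • A.b .CDI) := by
  rw [← lie_skew, A.bracket_xI]

theorem lie_x_add_smul_I (n m : ℤ) :
    ⁅A.b (.x n) + e • A.b (.I n), A.b (.x m) + e • A.b (.I m)⁆ =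
      ((m : ℂ) - n) • (A.b (.x (n + m)) + e • A.b (.I (n + m))) +
      if n = -m then (((n : ℂ) ^ 3 - n) / 12) • A.b .CD + (2 * n * e) • A.b .CDI
        + (n * e ^ 2) • A.b .CI else 0 := by
  simp only [lie_add, add_lie, lie_smul, smul_lie, A.bracket_xx, A.bracket_xI, A.lie_I_x,
    A.bracket_II, add_comm m n]
  by_cases h : n = -m
  · subst h
    simp only [neg_neg, if_true]
    push_cast
    module
  · simp only [h, show m ≠ -n by omega, if_false]
    module

noncomputable def zeroModeShift : L := e • A.b .CDI + (e ^ 2 / 2) • A.b .CI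

theorem lie_ite_zeroModeShift (p : Prop) [Decidable p] (y : L) :
    ⁅y, if p then A.zeroModeShift e else 0⁆ = 0 := by
  split_ifs <;> simp [zeroModeShift, A.central_CDI, A.central_CI]

theorem ite_zeroModeShift_lie (p : Prop) [Decidable p] (y : L) :
    ⁅if p then A.zeroModeShift e else 0, y⁆ = 0 := by
  rw [← lie_skew, lie_ite_zeroModeShift, neg_zero]

noncomputable def virasoroFamily : Option ℤ → L
  | none => A.b .CD
  | some n => A.b (.x n) + e • A.b (.I n) - if n = 0 then A.zeroModeShift e else 0

theorem isVirasoroFamily_virasoroFamily : IsVirasoroFamily (A.virasoroFamily e) where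
  bracket_LL n m := by
    simp only [virasoroFamily, lie_sub, sub_lie, lie_ite_zeroModeShift, ite_zeroModeShift_lie,
      sub_zero, lie_x_add_smul_I]
    by_cases h : n = -m
    · subst h
      simp only [neg_add_cancel, if_true, zeroModeShift]
      push_cast
      module
    · simp only [h, show n + m ≠ 0 by omega, if_false]
      module
  central_C := A.central_CD

theorem repr_virasoroFamily (i j : Option ℤ) :
    A.b.repr (A.virasoroFamily e j) (i.elim .CD .x) = if i = j then 1 else 0 := by
  rcases i with _ | m <;> rcases j with _ | n <;> simp only [virasoroFamily, zeroModeShift] <;>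
    split_ifs <;> simp_all

theorem linearIndependent_virasoroFamily : LinearIndependent ℂ (A.virasoroFamily e) :=
  .of_pairwise_dual_eq_zero_one _ (fun i => A.b.coord (i.elim .CD .x))
    (fun i j hij => by simp [repr_virasoroFamily, hij])
    (fun i => by simp [repr_virasoroFamily])

theorem range_virasoroFamily : Set.range (A.virasoroFamily e) =
    {y | ∃ n : ℤ, n ≠ 0 ∧ y = A.b (.x n) + e • A.b (.I n)} ∪
      {A.b (.x 0) + e • A.b (.I 0) - e • A.b .CDI - (e ^ 2 / 2) • A.b .CI, A.b .CD} := by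
  ext y
  constructor
  · rintro ⟨_ | n, rfl⟩
    · simp [virasoroFamily]
    · by_cases hn : n = 0
      · simp [virasoroFamily, zeroModeShift, hn, sub_sub]
      · exact Or.inl ⟨n, hn, by simp [virasoroFamily, hn]⟩
  · rintro (⟨n, hn, rfl⟩ | rfl | rfl)
    · exact ⟨some n, by simp [virasoroFamily, hn]⟩
    · exact ⟨some 0, by simp [virasoroFamily, zeroModeShift, sub_sub]⟩
    · exact ⟨none, rfl⟩

end TwistedHV

/-- In 𝕃, `[x n + e•I n, x (−n) + e•I (−n)] =
−2n(x 0 + e•I 0 − e•C_DI − (e²/2)•C_I) + ((n³−n)/12)•C_D` for `n ≠ 0`; consequently the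
elements `{x n + e•I n : n ≠ 0} ∪ {x 0 + e•I 0 − e•C_DI − (e²/2)•C_I, C_D}` span
a Lie subalgebra which is isomorphic to the Virasoro algebra. -/
theorem thv_virasoro_subalgebra {L : Type*} [LieRing L] [LieAlgebra ℂ L]
    (A : TwistedHV L) (e : ℂ) :
    (∀ n : ℤ, n ≠ 0 →
      ⁅A.b (.x n) + e • A.b (.I n), A.b (.x (-n)) + e • A.b (.I (-n))⁆ =
        (-2 * (n : ℂ)) • (A.b (.x 0) + e • A.b (.I 0) - e • A.b .CDI
            - (e ^ 2 / 2) • A.b .CI)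
          + (((n : ℂ) ^ 3 - n) / 12) • A.b .CD) ∧
    ∃ K : LieSubalgebra ℂ L,
      (K : Submodule ℂ L) = Submodule.span ℂ
        ({y : L | ∃ n : ℤ, n ≠ 0 ∧ y = A.b (.x n) + e • A.b (.I n)} ∪
          {A.b (.x 0) + e • A.b (.I 0) - e • A.b .CDI - (e ^ 2 / 2) • A.b .CI,
            A.b .CD}) ∧
      ∃ (V : Type) (_ : LieRing V) (_ : LieAlgebra ℂ V) (_ : VirasoroAlg V),
        Nonempty (K ≃ₗ⁅ℂ⁆ V) := by
  have hv := A.isVirasoroFamily_virasoroFamily e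
  refine ⟨fun n _ => ?_, lieSpan ℂ L (Set.range (A.virasoroFamily e)), ?_, ?_⟩
  · rw [A.lie_x_add_smul_I, if_pos (neg_neg n).symm, add_neg_cancel]
    push_cast
    module
  · rw [hv.coe_lieSpan_range, A.range_virasoroFamily]
  · exact (hv.virasoroAlg (A.linearIndependent_virasoroFamily e)).exists_lieEquiv_small
end

section
/- For any complex numbers α, β, F, the vector space with basis {v_{α+n} : n ∈ ℤ} equipped with the actions x_i · v_{α+k} = (α + k + βi) v_{α+i+k}, I(i) · v_{α+k} = F v_{α+k+i}, and C_D, C_DI, C_I acting by zero, is a module over the twisted Heisenberg–Virasoro algebra 𝕃 (i.e., all defining bracket relations hold on every basis vector). -/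
/-- The action of `x i` on `V(α,β;F)`, with basis vector `Finsupp.single k 1`
playing the role of `v_{α+k}`: `x i · v_{α+k} = (α + k + βi) v_{α+i+k}`. -/
noncomputable def Vx (α β : ℂ) (i : ℤ) : (ℤ →₀ ℂ) →ₗ[ℂ] (ℤ →₀ ℂ) :=
  Finsupp.lsum ℂ fun k : ℤ => (α + k + β * i) • Finsupp.lsingle (i + k)

/-- The action of `I i` on `V(α,β;F)`: `I i · v_{α+k} = F v_{α+k+i}`. -/
noncomputable def VI (F : ℂ) (i : ℤ) : (ℤ →₀ ℂ) →ₗ[ℂ] (ℤ →₀ ℂ) :=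
  Finsupp.lsum ℂ fun k : ℤ => F • Finsupp.lsingle (k + i)

lemma Vx_single (α β : ℂ) (i k : ℤ) (c : ℂ) :
    Vx α β i (Finsupp.single k c) = (α + k + β * i) • Finsupp.single (i + k) c := by
  rw [Vx, Finsupp.lsum_single, LinearMap.smul_apply, Finsupp.lsingle_apply]

lemma VI_single (F : ℂ) (i k : ℤ) (c : ℂ) :
    VI F i (Finsupp.single k c) = F • Finsupp.single (k + i) c := by
  rw [VI, Finsupp.lsum_single, LinearMap.smul_apply, Finsupp.lsingle_apply]

/-- For any `α β F ∈ ℂ`, the operators `Vx` and `VI`, together with the central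
elements `C_D, C_DI, C_I` acting by `0`, satisfy all the defining bracket relations
of the twisted Heisenberg–Virasoro algebra 𝕃; hence `V(α,β;F)` is an 𝕃-module. -/
theorem V_is_module (α β F : ℂ) :
    (∀ n m : ℤ, Vx α β n ∘ₗ Vx α β m - Vx α β m ∘ₗ Vx α β n =
      ((m : ℂ) - n) • Vx α β (n + m) +
        (if n = -m then ((n : ℂ) ^ 3 - n) / 12 else 0) • (0 : (ℤ →₀ ℂ) →ₗ[ℂ] (ℤ →₀ ℂ))) ∧
    (∀ n m : ℤ, Vx α β n ∘ₗ VI F m - VI F m ∘ₗ Vx α β n =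
      (m : ℂ) • VI F (n + m) +
        (if n = -m then (n : ℂ) ^ 2 + n else 0) • (0 : (ℤ →₀ ℂ) →ₗ[ℂ] (ℤ →₀ ℂ))) ∧
    (∀ n m : ℤ, VI F n ∘ₗ VI F m - VI F m ∘ₗ VI F n =
      (if n = -m then (n : ℂ) else 0) • (0 : (ℤ →₀ ℂ) →ₗ[ℂ] (ℤ →₀ ℂ))) := by
  refine ⟨fun n m => ?_, fun n m => ?_, fun n m => ?_⟩ <;>
  · apply Finsupp.lhom_ext
    intro k c
    simp only [LinearMap.sub_apply, LinearMap.comp_apply, LinearMap.add_apply,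
      LinearMap.smul_apply, LinearMap.zero_apply, smul_zero, add_zero,
      Vx_single, VI_single, map_smul]
    simp only [smul_smul, Finsupp.smul_single]
    try rw [show m + (n + k) = n + m + k by ring]
    try rw [show n + (m + k) = n + m + k by ring]
    try rw [show n + (k + m) = n + m + k by ring]
    try rw [show n + k + m = n + m + k by ring]
    try rw [show k + m + n = n + m + k by ring]
    try rw [show k + n + m = n + m + k by ring]
    try rw [show k + (n + m) = n + m + k by ring]
    rw [← Finsupp.single_sub]
    first
      | (simp; done)
      | (congr 1 <;> (simp only [smul_eq_mul]; push_cast; ring))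
end

section
/- Let α, β, F ∈ ℂ and let (a_n)_{n∈ℤ} be complex numbers satisfying (α−β+n+2)a_{n+1} = (α−β+n+1)a_n + F for all n ∈ ℤ, and also the relations F_{2,n} = (α+β+n+1)a_n − (α+n+β)a_{n+1} together with the commutation condition F_{2,n+1}·a_n = a_{n+2}·F_{2,n} for all n. Then for every n ∈ ℤ: (a_n − F)·((α−β+n+1)a_n − (α+n+β)F) = 0. -/
/-- Identity (3.9): if `a n` (playing the role of `F_{1,n}`) satisfies the recurrence
(3.5) `(α−β+n+2)a (n+1) = (α−β+n+1)a n + F`, and `F2 n` (playing the role of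
`F_{2,n}`) satisfies (3.6) `F2 n = (α+β+n+1)a n − (α+n+β)a (n+1)` together with the
commutation relation `F2 (n+1) · a n = a (n+2) · F2 n`, then
`(a n − F)((α−β+n+1)a n − (α+n+β)F) = 0` for all `n`. -/
theorem relation_3_9 (α β F : ℂ) (a F2 : ℤ → ℂ)
    (h35 : ∀ n : ℤ, (α - β + n + 2) * a (n + 1) = (α - β + n + 1) * a n + F)
    (h36 : ∀ n : ℤ, F2 n = (α + β + n + 1) * a n - (α + n + β) * a (n + 1))
    (hcomm : ∀ n : ℤ, F2 (n + 1) * a n = a (n + 2) * F2 n) :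
    ∀ n : ℤ, (a n - F) * ((α - β + n + 1) * a n - (α + n + β) * F) = 0 := by
  intro n
  have h1 := h35 n
  have h2 := h35 (n + 1)
  have h3 := hcomm n
  rw [h36 n, h36 (n + 1)] at h3
  have e : n + 1 + 1 = n + 2 := by ring
  rw [e] at h2 h3
  push_cast at h1 h2 h3 ⊢
  set c : ℂ := α - β + n + 1 with hc
  set s : ℂ := α + n + β with hs
  have h1' : (c + 1) * a (n + 1) = c * a n + F := by rw [hc]; linear_combination h1
  have h2' : (c + 2) * a (n + 2) = (c + 1) * a (n + 1) + F := by
    rw [hc]; linear_combination h2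
  have h3' : ((s + 2) * a (n + 1) - (s + 1) * a (n + 2)) * a n
      = a (n + 2) * ((s + 1) * a n - s * a (n + 1)) := by
    rw [hs]; linear_combination h3
  linear_combination ((c + 1) * (c + 2) / 2) * h3'
    - (1 / 2) * ((s + 2) * (c + 2) * a n - 2 * (s + 1) * (c + 1) * a n
        + s * (c + 1) * a (n + 1) + s * (c + 2) * a (n + 2)
        - s * ((c + 1) * a (n + 1) - (c * a n + F))) * h1'
    - (1 / 2) * (s * (c * a n + F) - 2 * (s + 1) * (c + 1) * a n) * h2'
end

section
/- Let α ∈ ℂ with α+n ≠ 0 for all n ∈ ℤ, and let (c_n)_{n∈ℤ} satisfy c_n = (α+n)/(α+n+1)·c_{n−1} − 1/(α+n+1)² for all n ∈ ℤ, and define G_n = (α+n+1)c_n − (α+n)c_{n+1} − 1/(α+n+1) and suppose (α+n+2)G_n' = (α+n)G'_{n−2} − 4/(α+n+2)² where G'_n = G_n. Then equating the two resulting expressions for G'_{n+2} yields −6/((α+n+3)(α+n+4)²(α+n+1)) = 0 for all n, which is impossible; hence no such sequence (c_n) exists. -/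
/-!
With `d n = (α + n + 1) * c n`, the recurrence for `c` telescopes to
`d n = d (n - 1) - 1 / (α + n + 1)`, and the definition of `G` becomes
`(α + n + 2) * G n = 2 * d n - 2 / (α + n + 2) - 1 / (α + n + 1)`.
Substituted into the recurrence for `G`, the terms `d n` and `d (n - 2)` cancel, leaving an
identity in `x = α + n` alone, `2/(x+2) + 3/(x+1) = 1/(x-1) + 4/(x+2)^2`. Clearing denominators,
a cubic with leading coefficient `4` vanishes at every `α + n`; but its third difference along
`α, α + 1, α + 2, α + 3` is the constant `4 * 3! = 24`.
-/

variable {K : Type*} [Field K]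

section Recurrences

variable {α : K} {c G : ℤ → K} (hα : ∀ n : ℤ, α + n ≠ 0)
  (hc : ∀ n : ℤ, c n = (α + n) / (α + n + 1) * c (n - 1) - 1 / (α + n + 1) ^ 2)
include hα hc

theorem add_one_mul_c_eq (n : ℤ) :
    (α + n + 1) * c n = (α + n) * c (n - 1) - 1 / (α + n + 1) := by
  have h1 : α + n + 1 ≠ 0 := fun h ↦ hα (n + 1) (by push_cast; linear_combination h)
  rw [hc n]
  field_simp

variable (hG : ∀ n : ℤ, G n = (α + n + 1) * c n - (α + n) * c (n + 1) - 1 / (α + n + 1))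
include hG

theorem add_two_mul_G_eq (n : ℤ) :
    (α + n + 2) * G n = 2 * ((α + n + 1) * c n) - 2 / (α + n + 2) - 1 / (α + n + 1) := by
  have h1 : α + n + 1 ≠ 0 := fun h ↦ hα (n + 1) (by push_cast; linear_combination h)
  have h2 : α + n + 2 ≠ 0 := fun h ↦ hα (n + 2) (by push_cast; linear_combination h)
  have hc_succ := add_one_mul_c_eq hα hc (n + 1)
  push_cast at hc_succ
  rw [add_sub_cancel_right] at hc_succ
  rw [hG n]
  linear_combination (-(α + n)) * hc_succ - mul_inv_cancel₀ h1 + mul_inv_cancel₀ h2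

variable (hrec : ∀ n : ℤ, (α + n + 2) * G n = (α + n) * G (n - 2) - 4 / (α + n + 2) ^ 2)
include hrec

theorem cubic_eq_zero (n : ℤ) :
    4 * (α + n) ^ 3 + 4 * (α + n) ^ 2 - 10 * (α + n) - 16 = 0 := by
  have hm1 : α + n - 1 ≠ 0 := fun h ↦ hα (n - 1) (by push_cast; linear_combination h)
  have h1 : α + n + 1 ≠ 0 := fun h ↦ hα (n + 1) (by push_cast; linear_combination h)
  have h2 : α + n + 2 ≠ 0 := fun h ↦ hα (n + 2) (by push_cast; linear_combination h)
  have hG_pred := add_two_mul_G_eq hα hc hG (n - 2)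
  have hc_pred := add_one_mul_c_eq hα hc (n - 1)
  rw [sub_sub, one_add_one_eq_two] at hc_pred
  push_cast at hG_pred hc_pred
  have hx : 2 / (α + n + 2) + 3 / (α + n + 1) = 1 / (α + n - 1) + 4 / (α + n + 2) ^ 2 := by
    linear_combination add_two_mul_G_eq hα hc hG n - hrec n - hG_pred
      + 2 * add_one_mul_c_eq hα hc n + 2 * hc_pred
  field_simp at hx
  linear_combination hx

end Recurrences

theorem exists_cubic_ne_zero [CharZero K] (α : K) :
    ∃ n : ℤ, 4 * (α + n) ^ 3 + 4 * (α + n) ^ 2 - 10 * (α + n) - 16 ≠ 0 := by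
  by_contra! h
  have h0 := h 0
  have h1 := h 1
  have h2 := h 2
  have h3 := h 3
  push_cast at h0 h1 h2 h3
  have h24 : (24 : K) = 0 := by linear_combination h3 - 3 * h2 + 3 * h1 - h0
  norm_num at h24

/-- The contradiction in Case 1.2.1 of Lemma 4.2: if `α + n ≠ 0` for all `n ∈ ℤ`, the
sequence `c` (playing the role of `F_{1,n}(k₀−1,1)`) satisfies recurrence (4.13)
`c n = (α+n)/(α+n+1) · c (n−1) − 1/(α+n+1)²`, and `G` (playing the role of
`F_{2,n}(k₀−1,1)`) is given by `G n = (α+n+1)c n − (α+n)c (n+1) − 1/(α+n+1)` and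
satisfies `(α+n+2)G n = (α+n)G (n−2) − 4/(α+n+2)²`, then equating the two resulting
expressions for `G (n+2)` yields `−6/((α+n+3)(α+n+4)²(α+n+1)) = 0`, which is
impossible; hence no such sequence exists. -/
theorem case_1_2_1_contradiction (α : ℂ) (hα : ∀ n : ℤ, α + (n : ℂ) ≠ 0)
    (c : ℤ → ℂ)
    (hc : ∀ n : ℤ, c n = (α + n) / (α + n + 1) * c (n - 1) - 1 / (α + n + 1) ^ 2)
    (G : ℤ → ℂ)
    (hG : ∀ n : ℤ, G n = (α + n + 1) * c n - (α + n) * c (n + 1) - 1 / (α + n + 1))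
    (hrec : ∀ n : ℤ, (α + n + 2) * G n = (α + n) * G (n - 2) - 4 / (α + n + 2) ^ 2) :
    False := by
  obtain ⟨n, hn⟩ := exists_cubic_ne_zero α
  exact hn (cubic_eq_zero hα hc hG hrec n)
end
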